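/- Let s_1,…,s_n be distinct points of the unit square U = [0,1]², ordered so that x(s_j)+y(s_j) ≤ x(s_i)+y(s_i) whenever i < j, and let t_1,…,t_n be the associated tiles. Fix i, and for each j < i let r_j ⊆ U be any axis-aligned rectangle anchored at s_j. Then every axis-aligned rectangle contained in the tile t_i is disjoint from every r_j with j < i; consequently, for every axis-aligned rectangle R ⊆ t_i there exists an axis-aligned rectangle anchored at s_i, contained in U, interior-disjoint from r_1,…,r_{i−1}, whose area is at least the area of R. -/

import Mathlib

/-!
A point of a tile `t_i` dominates no earlier anchor `s_j`, whereas every point of a rectangle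
anchored at `s_j` does; this gives the first claim. For the second, take the rectangle from
`s_i` to the upper-right corner `(b, d)` of `R`: it contains `R` because `s_i` is dominated by
the lower-left corner of `R`, and it meets no `r_j`, since all its points lie below `(b, d)`,
which lies in `t_i` and hence does not dominate `s_j`.
-/

open MeasureTheory

/-- The unit square `[0,1]²` in the plane. -/
def unitSq : Set (ℝ × ℝ) := Set.Icc (0:ℝ) 1 ×ˢ Set.Icc (0:ℝ) 1

/-- `p ≼ q` in the dominance order: `q` dominates `p` coordinatewise. -/
def Dominates (p q : ℝ × ℝ) : Prop := p.1 ≤ q.1 ∧ p.2 ≤ q.2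

/-- The tile associated with the point `s i`: all points of the unit square that
dominate `s i` but dominate no earlier point `s j`, `j < i`. -/
def tile {n : ℕ} (s : Fin n → ℝ × ℝ) (i : Fin n) : Set (ℝ × ℝ) :=
  {p | p ∈ unitSq ∧ Dominates (s i) p ∧ ∀ j : Fin n, j < i → ¬ Dominates (s j) p}

/-- The axis-aligned rectangle with lower-left corner `s` and upper-right corner `q`. -/
def rectA (s q : ℝ × ℝ) : Set (ℝ × ℝ) := Set.Icc s.1 q.1 ×ˢ Set.Icc s.2 q.2

lemma rectA_eq_Icc (s q : ℝ × ℝ) : rectA s q = Set.Icc s q := (Set.Icc_prod_eq s q).symm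

lemma unitSq_eq_Icc : unitSq = Set.Icc 0 1 := (Set.Icc_prod_eq 0 1).symm

lemma rectA_subset_Ici (s q : ℝ × ℝ) : rectA s q ⊆ Set.Ici s :=
  rectA_eq_Icc s q ▸ Set.Icc_subset_Ici_self

lemma rectA_subset_Iic (s q : ℝ × ℝ) : rectA s q ⊆ Set.Iic q :=
  rectA_eq_Icc s q ▸ Set.Icc_subset_Iic_self

lemma rectA_subset_unitSq {s q : ℝ × ℝ} (hs : s ∈ unitSq) (hq : q ∈ unitSq) :
    rectA s q ⊆ unitSq := by
  rw [unitSq_eq_Icc] at *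
  exact rectA_eq_Icc s q ▸ Set.ordConnected_Icc.out hs hq

-- `Dominates p q` unfolds to `p ≤ q` in the product order on `ℝ × ℝ`.
lemma not_le_of_mem_tile {n : ℕ} {s : Fin n → ℝ × ℝ} {i j : Fin n} (hji : j < i) {p : ℝ × ℝ}
    (hp : p ∈ tile s i) : ¬ s j ≤ p :=
  hp.2.2 j hji

lemma disjoint_tile_Ici {n : ℕ} (s : Fin n → ℝ × ℝ) {i j : Fin n} (hji : j < i) :
    Disjoint (tile s i) (Set.Ici (s j)) :=
  Set.disjoint_left.2 fun _ hp => not_le_of_mem_tile hji hp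

theorem stmt11_general (n : ℕ) (s : Fin n → ℝ × ℝ)
    (hU : ∀ i, s i ∈ unitSq)
    (i : Fin n) (q : Fin n → ℝ × ℝ) :
    ∀ a b c d : ℝ, a ≤ b → c ≤ d → Set.Icc a b ×ˢ Set.Icc c d ⊆ tile s i →
      (∀ j : Fin n, j < i →
        Disjoint (Set.Icc a b ×ˢ Set.Icc c d) (rectA (s j) (q j))) ∧
      (∃ p : ℝ × ℝ, (s i).1 ≤ p.1 ∧ (s i).2 ≤ p.2 ∧ rectA (s i) p ⊆ unitSq ∧
        (∀ j : Fin n, j < i →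
          Disjoint (interior (rectA (s i) p)) (interior (rectA (s j) (q j)))) ∧
        (b - a) * (d - c) ≤ (p.1 - (s i).1) * (p.2 - (s i).2)) := by
  intro a b c d hab hcd hR
  rw [Set.Icc_prod_Icc] at hR ⊢
  have hlow : (a, c) ∈ tile s i := hR (Set.left_mem_Icc.2 ⟨hab, hcd⟩)
  have hup : (b, d) ∈ tile s i := hR (Set.right_mem_Icc.2 ⟨hab, hcd⟩)
  obtain ⟨hsa, hsc⟩ : s i ≤ (a, c) := hlow.2.1
  refine ⟨fun j hj => (disjoint_tile_Ici s hj).mono hR (rectA_subset_Ici _ _),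
    (b, d), hsa.trans hab, hsc.trans hcd, ?_, fun j hj => ?_, ?_⟩
  · exact rectA_subset_unitSq (hU i) hup.1
  · refine (Set.Iic_disjoint_Ici.2 (not_le_of_mem_tile hj hup)).mono ?_ ?_
    · exact interior_subset.trans (rectA_subset_Iic _ _)
    · exact interior_subset.trans (rectA_subset_Ici _ _)
  · have hbs : 0 ≤ b - (s i).1 := by linarith
    gcongr

theorem stmt11 (n : ℕ) (s : Fin n → ℝ × ℝ)
    (hinj : Function.Injective s) (hU : ∀ i, s i ∈ unitSq)
    (horder : ∀ i j : Fin n, i < j → (s j).1 + (s j).2 ≤ (s i).1 + (s i).2)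
    (i : Fin n) (q : Fin n → ℝ × ℝ)
    (hanch : ∀ j : Fin n, j < i → (s j).1 ≤ (q j).1 ∧ (s j).2 ≤ (q j).2)
    (hsub : ∀ j : Fin n, j < i → rectA (s j) (q j) ⊆ unitSq) :
    ∀ a b c d : ℝ, a ≤ b → c ≤ d → Set.Icc a b ×ˢ Set.Icc c d ⊆ tile s i →
      (∀ j : Fin n, j < i →
        Disjoint (Set.Icc a b ×ˢ Set.Icc c d) (rectA (s j) (q j))) ∧
      (∃ p : ℝ × ℝ, (s i).1 ≤ p.1 ∧ (s i).2 ≤ p.2 ∧ rectA (s i) p ⊆ unitSq ∧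
        (∀ j : Fin n, j < i →
          Disjoint (interior (rectA (s i) p)) (interior (rectA (s j) (q j)))) ∧
        (b - a) * (d - c) ≤ (p.1 - (s i).1) * (p.2 - (s i).2)) :=
  stmt11_general n s hU i q
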